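/- Suppose the leading congruence ∼ of L has finite index and u·v ∼ u with u·v^ω ∈ L. If ū ∼ u and v̄ ≈ᵘ̄_L v (with ū·v̄ ∼ ū), then ū·v̄^ω ∈ L. In other words, membership of u·v^ω in L for normalized decompositions only depends on the ∼-class of u and the ≈ᵘ_L-class of v. -/
import Mathlib


/-- Concatenation of a finite word `u` with an ω-word `w`. -/
def finCat {α : Type*} (u : List α) (w : ℕ → α) : ℕ → α :=
  fun n => if h : n < u.length then u.get ⟨n, h⟩ else w (n - u.length)

/-- The ω-word `v^ω`, the infinite repetition of a nonempty finite word `v`. -/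
def repWord {α : Type*} (v : List α) (h : 0 < v.length) : ℕ → α :=
  fun n => v.get ⟨n % v.length, Nat.mod_lt n h⟩

/-- `u · v^ω ∈ L` (this requires `v` to be nonempty). -/
def OmegaIn {α : Type*} (L : Set (ℕ → α)) (u v : List α) : Prop :=
  ∃ h : 0 < v.length, finCat u (repWord v h) ∈ L

/-- The leading right congruence `u₁ ∼ u₂`. -/
def Leading {α : Type*} (L : Set (ℕ → α)) (u₁ u₂ : List α) : Prop :=
  ∀ w : ℕ → α, finCat u₁ w ∈ L ↔ finCat u₂ w ∈ L

/-- The limit progress relation `x ≈ᵘ_L y`. -/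
def LimitRel {α : Type*} (L : Set (ℕ → α)) (u x y : List α) : Prop :=
  ∀ v : List α,
    (Leading L (u ++ x ++ v) u → OmegaIn L u (x ++ v)) ↔
    (Leading L (u ++ y ++ v) u → OmegaIn L u (y ++ v))

/-- The syntactic progress relation `x ≈ᵘ_S y`. -/
def SynRel {α : Type*} (L : Set (ℕ → α)) (u x y : List α) : Prop :=
  Leading L (u ++ x) (u ++ y) ∧
  ∀ v : List α, Leading L (u ++ x ++ v) u →
    (OmegaIn L u (x ++ v) ↔ OmegaIn L u (y ++ v))

/-- The periodic progress relation `x ≈ᵘ_P y`. -/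
def PerRel {α : Type*} (L : Set (ℕ → α)) (u x y : List α) : Prop :=
  ∀ v : List α, OmegaIn L u (x ++ v) ↔ OmegaIn L u (y ++ v)

/-- The recurrent progress relation `x ≈ᵘ_R y`. -/
def RecRel {α : Type*} (L : Set (ℕ → α)) (u x y : List α) : Prop :=
  ∀ v : List α,
    (Leading L (u ++ x ++ v) u ∧ OmegaIn L u (x ++ v)) ↔
    (Leading L (u ++ y ++ v) u ∧ OmegaIn L u (y ++ v))

/-- The progress right pro-congruence `x ≈ᵘ_N y`. -/
def ProRel {α : Type*} (L : Set (ℕ → α)) (u x y : List α) : Prop :=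
  ∀ v : List α,
    (Leading L (u ++ x ++ v) u ∧ Leading L (u ++ y ++ v) u) →
    (OmegaIn L u (x ++ v) ↔ OmegaIn L u (y ++ v))

lemma finCat_append {α : Type*} (u x : List α) (w : ℕ → α) :
    finCat (u ++ x) w = finCat u (finCat x w) := by
  funext n
  simp only [finCat, List.length_append]
  by_cases h1 : n < u.length
  · rw [dif_pos (by omega), dif_pos h1]
    simp [List.getElem_append_left h1]
  · by_cases h2 : n < u.length + x.length
    · rw [dif_pos h2, dif_neg h1, dif_pos (by omega)]
      simp only [List.get_eq_getElem]
      rw [List.getElem_append_right (by omega)]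
    · rw [dif_neg (by omega), dif_neg h1, dif_neg (by omega)]
      congr 1
      omega

theorem limit_acceptance_well_defined {α : Type*} (L : Set (ℕ → α))
    (hfin : (Set.range fun u₁ => {u₂ | Leading L u₁ u₂}).Finite)
    (u v ub vb : List α)
    (hnorm : Leading L (u ++ v) u) (hmem : OmegaIn L u v)
    (hub : Leading L ub u) (hvb : LimitRel L ub vb v)
    (hnormb : Leading L (ub ++ vb) ub) :
    OmegaIn L ub vb := by
  have key := hvb []
  simp only [List.append_nil] at key
  apply key.mpr _ hnormb
  intro _
  obtain ⟨hv, hmemv⟩ := hmem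
  exact ⟨hv, (hub (repWord v hv)).mpr hmemv⟩
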